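/- (Cylindrical Extension) Let 𝕏 be a hyperteam. Then cyl(𝕏, x) ≡ (ext_W(𝕏~, x))~ for every variable x ∈ Var and every set of variables W with var(𝕏) ⊆ W ⊆ Var. -/

import Mathlib

open scoped Classical

namespace ADIF

/-- A relational first-order structure over a signature given by relation
symbols `RSym` with arities `ar`. -/
structure Struct (RSym : Type) (ar : RSym → ℕ) where
  A : Type
  nonempty : Nonempty A
  interp : ∀ R : RSym, (Fin (ar R) → A) → Prop

variable {Var RSym : Type} {ar : RSym → ℕ} {A : Type}

/-- Partial assignments from variables to values. -/
abbrev Asg (Var A : Type) := Var → Option A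

/-- Teams of assignments. -/
abbrev Team (Var A : Type) := Set (Asg Var A)

/-- Hyperteams: sets of teams. -/
abbrev Hyperteam (Var A : Type) := Set (Team Var A)

/-- The empty assignment. -/
def emptyAsg (Var A : Type) : Asg Var A := fun _ => none

/-- Domain of a partial assignment. -/
def dom (α : Asg Var A) : Set Var := {v | α v ≠ none}

/-- Restriction of an assignment to a set of variables. -/
noncomputable def restrictA (α : Asg Var A) (W : Set Var) : Asg Var A :=
  fun v => if v ∈ W then α v else none

/-- Restriction of a team. -/
noncomputable def restrictT (X : Team Var A) (W : Set Var) : Team Var A :=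
  (fun α => restrictA α W) '' X

/-- Restriction of a hyperteam. -/
noncomputable def restrictH (𝕏 : Hyperteam Var A) (W : Set Var) : Hyperteam Var A :=
  (fun X => restrictT X W) '' 𝕏

/-- The preorder `⊑` on hyperteams. -/
def incl (𝕏₁ 𝕏₂ : Hyperteam Var A) : Prop :=
  ∀ X₁ ∈ 𝕏₁, ∃ X₂ ∈ 𝕏₂, X₂ ⊆ X₁

/-- The equivalence `≡` on hyperteams. -/
def equivH (𝕏₁ 𝕏₂ : Hyperteam Var A) : Prop :=
  incl 𝕏₁ 𝕏₂ ∧ incl 𝕏₂ 𝕏₁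

/-- The preorder `⊑_W` on hyperteams, relativized to variables in `W`. -/
noncomputable def inclW (W : Set Var) (𝕏₁ 𝕏₂ : Hyperteam Var A) : Prop :=
  incl (restrictH 𝕏₁ W) (restrictH 𝕏₂ W)

/-- The equivalence `≡_W` on hyperteams, relativized to variables in `W`. -/
noncomputable def equivW (W : Set Var) (𝕏₁ 𝕏₂ : Hyperteam Var A) : Prop :=
  equivH (restrictH 𝕏₁ W) (restrictH 𝕏₂ W)

/-- The dual hyperteam `𝕏~`: the set of images of all choice functions for `𝕏`. -/
def dualH (𝕏 : Hyperteam Var A) : Hyperteam Var A :=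
  {Y | ∃ χ : Team Var A → Asg Var A, (∀ X ∈ 𝕏, χ X ∈ X) ∧ Y = χ '' 𝕏}

/-- A hyperteam is proper if it is neither empty nor null. -/
def Proper (𝕏 : Hyperteam Var A) : Prop := 𝕏 ≠ ∅ ∧ ∅ ∉ 𝕏

/-- All assignments in all teams of `𝕏` are defined exactly on `U`. -/
def HyperteamOn (𝕏 : Hyperteam Var A) (U : Set Var) : Prop :=
  ∀ X ∈ 𝕏, ∀ α ∈ X, dom α = U

/-- `𝕏` is a genuine hyperteam: all its assignments share the same domain. -/
def IsHyperteam (𝕏 : Hyperteam Var A) : Prop := ∃ U : Set Var, HyperteamOn 𝕏 U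

/-- `𝕏` is a hyperteam over some superset of `V`. -/
def OverSup (𝕏 : Hyperteam Var A) (V : Set Var) : Prop :=
  ∃ U : Set Var, V ⊆ U ∧ HyperteamOn 𝕏 U

/-- `W`-uniform functions from assignments to values. -/
def FW (W : Set Var) : Set (Asg Var A → A) :=
  {F | ∀ α : Asg Var A, F α = F (restrictA α W)}

/-- Update of an assignment at a variable. -/
noncomputable def updateA (α : Asg Var A) (x : Var) (a : A) : Asg Var A :=
  fun v => if v = x then some a else α v

/-- Extension of an assignment by a function for a variable. -/
noncomputable def extA (α : Asg Var A) (F : Asg Var A → A) (x : Var) : Asg Var A :=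
  updateA α x (F α)

/-- Extension of a team by a function for a variable. -/
noncomputable def extT (X : Team Var A) (F : Asg Var A → A) (x : Var) : Team Var A :=
  (fun α => extA α F x) '' X

/-- Extension of a hyperteam with a variable, `W`-uniformly. -/
noncomputable def extH (W : Set Var) (𝕏 : Hyperteam Var A) (x : Var) : Hyperteam Var A :=
  {Y | ∃ X ∈ 𝕏, ∃ F ∈ FW W, Y = extT X F x}

/-- Bipartitions of a hyperteam. -/
def Bipartition (𝕏₁ 𝕏₂ 𝕏 : Hyperteam Var A) : Prop :=
  𝕏₁ ∩ 𝕏₂ = ∅ ∧ 𝕏₁ ∪ 𝕏₂ = 𝕏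

/-- Cylindrification of a team with respect to a variable. -/
noncomputable def cylT (X : Team Var A) (x : Var) : Team Var A :=
  {β | ∃ α ∈ X, ∃ a : A, β = updateA α x a}

/-- Cylindrification of a hyperteam with respect to a variable. -/
noncomputable def cylH (𝕏 : Hyperteam Var A) (x : Var) : Hyperteam Var A :=
  (fun X => cylT X x) '' 𝕏

/-- ADIF formulas over variables `Var` and a relational signature. -/
inductive Formula (Var RSym : Type) (ar : RSym → ℕ) : Type
  | fls : Formula Var RSym ar
  | tru : Formula Var RSym ar
  | atom (R : RSym) (xs : Fin (ar R) → Var) : Formula Var RSym ar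
  | not (φ : Formula Var RSym ar) : Formula Var RSym ar
  | and (φ ψ : Formula Var RSym ar) : Formula Var RSym ar
  | or (φ ψ : Formula Var RSym ar) : Formula Var RSym ar
  | ex (s : Bool) (W : Finset Var) (x : Var) (φ : Formula Var RSym ar) : Formula Var RSym ar
  | all (s : Bool) (W : Finset Var) (x : Var) (φ : Formula Var RSym ar) : Formula Var RSym ar

/-- The constraint set `⟦±W⟧`: `W` itself for `+` (`s = true`),
its complement for `−` (`s = false`). -/
def denot (s : Bool) (W : Finset Var) : Set Var :=
  if s then (↑W : Set Var) else (↑W : Set Var)ᶜ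

/-- Support variables of an ADIF formula. -/
def supv : Formula Var RSym ar → Set Var
  | .fls => ∅
  | .tru => ∅
  | .atom _ xs => Set.range xs
  | .not φ => supv φ
  | .and φ ψ => supv φ ∪ supv ψ
  | .or φ ψ => supv φ ∪ supv ψ
  | .ex _ _ x φ => supv φ \ {x}
  | .all _ _ x φ => supv φ \ {x}

/-- Free variables of an ADIF formula. -/
noncomputable def freev : Formula Var RSym ar → Set Var
  | .fls => ∅
  | .tru => ∅
  | .atom _ xs => Set.range xs
  | .not φ => freev φ
  | .and φ ψ => freev φ ∪ freev ψ
  | .or φ ψ => freev φ ∪ freev ψ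
  | .ex s W x φ => if x ∈ freev φ then (freev φ \ {x}) ∪ denot s W else freev φ
  | .all s W x φ => if x ∈ freev φ then (freev φ \ {x}) ∪ denot s W else freev φ

/-- Alternation flags. -/
inductive Flag : Type
  | EA : Flag
  | AE : Flag

/-- The dual alternation flag. -/
def Flag.dual : Flag → Flag
  | .EA => .AE
  | .AE => .EA

/-- Satisfaction of an atom by a (partial) assignment. -/
def atomSat (𝔄 : Struct RSym ar) (R : RSym) (xs : Fin (ar R) → Var)
    (α : Asg Var 𝔄.A) : Prop :=
  ∃ v : Fin (ar R) → 𝔄.A, (∀ i, α (xs i) = some (v i)) ∧ 𝔄.interp R v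

/-- Hodges' alternating satisfaction relation `𝔄, 𝕏 ⊨^fl φ` for ADIF. -/
noncomputable def sat (𝔄 : Struct RSym ar) :
    Formula Var RSym ar → Flag → Hyperteam Var 𝔄.A → Prop
  | .fls, .EA, 𝕏 => ∅ ∈ 𝕏
  | .fls, .AE, 𝕏 => 𝕏 = ∅
  | .tru, .EA, 𝕏 => 𝕏 ≠ ∅
  | .tru, .AE, 𝕏 => ∅ ∉ 𝕏
  | .atom R xs, .EA, 𝕏 => ∃ X ∈ 𝕏, ∀ α ∈ X, atomSat 𝔄 R xs α
  | .atom R xs, .AE, 𝕏 => ∀ X ∈ 𝕏, ∃ α ∈ X, atomSat 𝔄 R xs α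
  | .not φ, fl, 𝕏 => ¬ sat 𝔄 φ fl.dual 𝕏
  | .and φ ψ, .EA, 𝕏 =>
      ∀ 𝕏₁ 𝕏₂, Bipartition 𝕏₁ 𝕏₂ 𝕏 → sat 𝔄 φ .EA 𝕏₁ ∨ sat 𝔄 ψ .EA 𝕏₂
  | .and φ ψ, .AE, 𝕏 =>
      ∀ 𝕏₁ 𝕏₂, Bipartition 𝕏₁ 𝕏₂ (dualH 𝕏) → sat 𝔄 φ .EA 𝕏₁ ∨ sat 𝔄 ψ .EA 𝕏₂
  | .or φ ψ, .AE, 𝕏 =>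
      ∃ 𝕏₁ 𝕏₂, Bipartition 𝕏₁ 𝕏₂ 𝕏 ∧ sat 𝔄 φ .AE 𝕏₁ ∧ sat 𝔄 ψ .AE 𝕏₂
  | .or φ ψ, .EA, 𝕏 =>
      ∃ 𝕏₁ 𝕏₂, Bipartition 𝕏₁ 𝕏₂ (dualH 𝕏) ∧ sat 𝔄 φ .AE 𝕏₁ ∧ sat 𝔄 ψ .AE 𝕏₂
  | .ex s W x φ, .EA, 𝕏 => sat 𝔄 φ .EA (extH (denot s W) 𝕏 x)
  | .ex s W x φ, .AE, 𝕏 => sat 𝔄 φ .EA (extH (denot s W) (dualH 𝕏) x)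
  | .all s W x φ, .AE, 𝕏 => sat 𝔄 φ .AE (extH (denot s W) 𝕏 x)
  | .all s W x φ, .EA, 𝕏 => sat 𝔄 φ .AE (extH (denot s W) (dualH 𝕏) x)

/-- `φ` is `fl`-satisfiable on `𝔄`: some proper hyperteam over `sup φ` satisfies it. -/
noncomputable def SatOn (𝔄 : Struct RSym ar) (fl : Flag) (φ : Formula Var RSym ar) : Prop :=
  ∃ 𝕏 : Hyperteam Var 𝔄.A, HyperteamOn 𝕏 (supv φ) ∧ Proper 𝕏 ∧ sat 𝔄 φ fl 𝕏

/-- `φ` is `fl`-satisfiable: `fl`-satisfiable on some structure. -/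
noncomputable def Satisfiable (Var : Type) {RSym : Type} {ar : RSym → ℕ}
    (fl : Flag) (φ : Formula Var RSym ar) : Prop :=
  ∃ 𝔄 : Struct RSym ar, SatOn 𝔄 fl φ

/-- `φ ⇛^fl ψ`: `fl`-implication between ADIF formulas. -/
noncomputable def ImpliesF (fl : Flag) (φ ψ : Formula Var RSym ar) : Prop :=
  ∀ 𝔄 : Struct RSym ar, ∀ 𝕏 : Hyperteam Var 𝔄.A,
    OverSup 𝕏 (supv φ ∪ supv ψ) → sat 𝔄 φ fl 𝕏 → sat 𝔄 ψ fl 𝕏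

/-- `φ ≅^fl ψ`: `fl`-equivalence between ADIF formulas. -/
noncomputable def EquivFlagF (fl : Flag) (φ ψ : Formula Var RSym ar) : Prop :=
  ImpliesF fl φ ψ ∧ ImpliesF fl ψ φ

/-- `φ ≅ ψ`: equivalence for both alternation flags. -/
noncomputable def EquivF (φ ψ : Formula Var RSym ar) : Prop :=
  ∀ fl : Flag, EquivFlagF fl φ ψ

end ADIF

namespace ADIF

variable {Var RSym : Type} {ar : RSym → ℕ} {A : Type}

/-- A formula is atomic if it is `⊥`, `⊤` or a relational atom. -/
def IsAtomic : Formula Var RSym ar → Prop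
  | .fls => True
  | .tru => True
  | .atom _ _ => True
  | _ => False

/-- Negation normal form: negation is applied only to atomic formulas. -/
def IsNNF : Formula Var RSym ar → Prop
  | .fls => True
  | .tru => True
  | .atom _ _ => True
  | .not φ => IsAtomic φ
  | .and φ ψ => IsNNF φ ∧ IsNNF ψ
  | .or φ ψ => IsNNF φ ∧ IsNNF ψ
  | .ex _ _ _ φ => IsNNF φ
  | .all _ _ _ φ => IsNNF φ

/-- An item `Q^{±W}x` of a quantifier prefix: `q = true` means `∃`,
`q = false` means `∀`; `s = true` means `+W`, `s = false` means `−W`. -/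
structure QItem (Var : Type) where
  q : Bool
  s : Bool
  W : Finset Var
  x : Var

/-- The constraint set of a quantifier-prefix item. -/
def QItem.constr (i : QItem Var) : Set Var := denot i.s i.W

/-- Well-formed quantifier prefixes: each variable is quantified at most once,
does not occur in its own constraint set, and is not quantified in the scope of
a quantifier whose constraint set contains it. -/
def GoodPrefix : List (QItem Var) → Prop
  | [] => True
  | i :: rest =>
      i.x ∉ i.constr ∧ (∀ j ∈ rest, j.x ≠ i.x ∧ j.x ∉ i.constr) ∧ GoodPrefix rest

/-- Prefixing a formula by a quantifier prefix. -/
def applyPrefix : List (QItem Var) → Formula Var RSym ar → Formula Var RSym ar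
  | [], φ => φ
  | i :: rest, φ =>
      if i.q then Formula.ex i.s i.W i.x (applyPrefix rest φ)
      else Formula.all i.s i.W i.x (applyPrefix rest φ)

/-- The extension operator `ext^fl(𝕏, Q^{±W}x)` for a single quantifier. -/
noncomputable def extQ (fl : Flag) (𝕏 : Hyperteam Var A) (i : QItem Var) : Hyperteam Var A :=
  match fl, i.q with
  | .EA, true => extH (denot i.s i.W) 𝕏 i.x
  | .AE, false => extH (denot i.s i.W) 𝕏 i.x
  | .EA, false => dualH (extH (denot i.s i.W) (dualH 𝕏) i.x)
  | .AE, true => dualH (extH (denot i.s i.W) (dualH 𝕏) i.x)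

/-- The extension operator `ext^fl(𝕏, ℘)` for a quantifier prefix. -/
noncomputable def extP (fl : Flag) : Hyperteam Var A → List (QItem Var) → Hyperteam Var A
  | 𝕏, [] => 𝕏
  | 𝕏, i :: rest => extP fl (extQ fl 𝕏 i) rest

/-- Ordinary first-order formulas over the signature. -/
inductive FForm (Var RSym : Type) (ar : RSym → ℕ) : Type
  | fls : FForm Var RSym ar
  | tru : FForm Var RSym ar
  | atom (R : RSym) (xs : Fin (ar R) → Var) : FForm Var RSym ar
  | not (φ : FForm Var RSym ar) : FForm Var RSym ar
  | and (φ ψ : FForm Var RSym ar) : FForm Var RSym ar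
  | or (φ ψ : FForm Var RSym ar) : FForm Var RSym ar
  | ex (x : Var) (φ : FForm Var RSym ar) : FForm Var RSym ar
  | all (x : Var) (φ : FForm Var RSym ar) : FForm Var RSym ar

/-- Free variables of a first-order formula. -/
def folFree : FForm Var RSym ar → Set Var
  | .fls => ∅
  | .tru => ∅
  | .atom _ xs => Set.range xs
  | .not φ => folFree φ
  | .and φ ψ => folFree φ ∪ folFree ψ
  | .or φ ψ => folFree φ ∪ folFree ψ
  | .ex x φ => folFree φ \ {x}
  | .all x φ => folFree φ \ {x}

/-- Standard Tarskian satisfaction `𝔄, α ⊨_FOL φ` for first-order formulas. -/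
noncomputable def folSat (𝔄 : Struct RSym ar) : FForm Var RSym ar → Asg Var 𝔄.A → Prop
  | .fls, _ => False
  | .tru, _ => True
  | .atom R xs, α => atomSat 𝔄 R xs α
  | .not φ, α => ¬ folSat 𝔄 φ α
  | .and φ ψ, α => folSat 𝔄 φ α ∧ folSat 𝔄 ψ α
  | .or φ ψ, α => folSat 𝔄 φ α ∨ folSat 𝔄 ψ α
  | .ex x φ, α => ∃ a : 𝔄.A, folSat 𝔄 φ (updateA α x a)
  | .all x φ, α => ∀ a : 𝔄.A, folSat 𝔄 φ (updateA α x a)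

/-- The FOL fragment of ADIF: every quantifier is `Q^{+W}x` with
`W = sup(φ) ∖ {x}`. -/
def IsFOLFrag : Formula Var RSym ar → Prop
  | .fls => True
  | .tru => True
  | .atom _ _ => True
  | .not φ => IsFOLFrag φ
  | .and φ ψ => IsFOLFrag φ ∧ IsFOLFrag ψ
  | .or φ ψ => IsFOLFrag φ ∧ IsFOLFrag ψ
  | .ex s W x φ => s = true ∧ (↑W : Set Var) = supv φ \ {x} ∧ IsFOLFrag φ
  | .all s W x φ => s = true ∧ (↑W : Set Var) = supv φ \ {x} ∧ IsFOLFrag φ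

/-- Tarskian satisfaction of an ADIF formula (in the FOL fragment) by an
assignment, quantifier decorations being ignored. -/
noncomputable def tarskiSat (𝔄 : Struct RSym ar) : Formula Var RSym ar → Asg Var 𝔄.A → Prop
  | .fls, _ => False
  | .tru, _ => True
  | .atom R xs, α => atomSat 𝔄 R xs α
  | .not φ, α => ¬ tarskiSat 𝔄 φ α
  | .and φ ψ, α => tarskiSat 𝔄 φ α ∧ tarskiSat 𝔄 ψ α
  | .or φ ψ, α => tarskiSat 𝔄 φ α ∨ tarskiSat 𝔄 ψ α
  | .ex _ _ x φ, α => ∃ a : 𝔄.A, tarskiSat 𝔄 φ (updateA α x a)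
  | .all _ _ x φ, α => ∀ a : 𝔄.A, tarskiSat 𝔄 φ (updateA α x a)

end ADIF

/-!
A team `Z` contains a team of the dual hyperteam `𝕐~` exactly when `Z` meets every team of `𝕐`.
Every team of `ext_W(𝕏~, x)` contains an extension of a point of each `X ∈ 𝕏`, hence meets
`cyl(X, x)`. Conversely, if no `cyl(X, x)` lies inside `Z`, pick in each `X` a point together
with a value for `x` leading out of `Z`; since these points are defined on `var(𝕏) ⊆ W`, the
choice of values is a `W`-uniform function, and the resulting team of `ext_W(𝕏~, x)` misses `Z`.
-/

namespace ADIF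

variable {Var A : Type}

theorem restrictA_restrictA (α : Asg Var A) (W : Set Var) :
    restrictA (restrictA α W) W = restrictA α W := by
  funext v
  by_cases hv : v ∈ W <;> simp [restrictA, hv]

theorem restrictA_eq_self {α : Asg Var A} {W : Set Var} (h : dom α ⊆ W) :
    restrictA α W = α := by
  funext v
  by_cases hv : v ∈ W
  · simp [restrictA, hv]
  · simpa [restrictA, hv, dom, eq_comm] using mt (@h v) hv

theorem exists_mem_dualH_subset_iff {𝕐 : Hyperteam Var A} {Z : Team Var A} :
    (∃ Y ∈ dualH 𝕐, Y ⊆ Z) ↔ ∀ X ∈ 𝕐, (X ∩ Z).Nonempty := by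
  constructor
  · rintro ⟨_, ⟨χ, hχ, rfl⟩, hYZ⟩ X hX
    exact ⟨χ X, hχ X hX, hYZ ⟨X, hX, rfl⟩⟩
  · intro h
    choose! χ hχ using h
    refine ⟨χ '' 𝕐, ⟨χ, fun X hX => (hχ X hX).1, rfl⟩, ?_⟩
    rintro _ ⟨X, hX, rfl⟩
    exact (hχ X hX).2

theorem HyperteamOn.dualH {𝕏 : Hyperteam Var A} {U : Set Var} (h : HyperteamOn 𝕏 U) :
    HyperteamOn (dualH 𝕏) U := by
  rintro _ ⟨χ, hχ, rfl⟩ _ ⟨X, hX, rfl⟩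
  exact h X hX (χ X) (hχ X hX)

theorem exists_mem_FW_forall_extA [Nonempty A] {Y : Team Var A} {W : Set Var} {x : Var}
    {P : Asg Var A → Prop} (hYW : ∀ α ∈ Y, dom α ⊆ W)
    (h : ∀ α ∈ Y, ∃ a, P (updateA α x a)) :
    ∃ F ∈ FW W, ∀ α ∈ Y, P (extA α F x) := by
  let g : Asg Var A → A := fun β => Classical.epsilon fun a => P (updateA β x a)
  refine ⟨fun β => g (restrictA β W), fun β => by simp only [restrictA_restrictA], ?_⟩
  intro α hα
  simpa only [extA, restrictA_eq_self (hYW α hα)] using Classical.epsilon_spec (h α hα)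

theorem incl_cylH_dualH_extH (𝕏 : Hyperteam Var A) (W : Set Var) (x : Var) :
    incl (cylH 𝕏 x) (dualH (extH W (dualH 𝕏) x)) := by
  rintro _ ⟨X, hX, rfl⟩
  refine exists_mem_dualH_subset_iff.mpr ?_
  rintro _ ⟨_, ⟨χ, hχ, rfl⟩, F, -, rfl⟩
  exact ⟨extA (χ X) F x, ⟨χ X, ⟨X, hX, rfl⟩, rfl⟩, χ X, hχ X hX, F (χ X), rfl⟩

theorem incl_dualH_extH_cylH [Nonempty A] {𝕏 : Hyperteam Var A} {U W : Set Var}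
    (hU : HyperteamOn 𝕏 U) (hUW : U ⊆ W) (x : Var) :
    incl (dualH (extH W (dualH 𝕏) x)) (cylH 𝕏 x) := by
  intro Z hZ
  by_contra! hcyl
  have hescape : ∀ X ∈ 𝕏, (X ∩ {α | ∃ a, updateA α x a ∉ Z}).Nonempty := by
    intro X hX
    obtain ⟨_, ⟨α, hα, a, rfl⟩, haZ⟩ := Set.not_subset.mp (hcyl _ ⟨X, hX, rfl⟩)
    exact ⟨α, hα, a, haZ⟩
  obtain ⟨Y, hY, hYescape⟩ := exists_mem_dualH_subset_iff.mpr hescape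
  obtain ⟨F, hF, hFZ⟩ := exists_mem_FW_forall_extA (P := (· ∉ Z))
    (fun α hα => HyperteamOn.dualH hU Y hY α hα ▸ hUW) hYescape
  obtain ⟨_, ⟨α, hα, rfl⟩, hαZ⟩ :=
    exists_mem_dualH_subset_iff.mp ⟨Z, hZ, subset_rfl⟩ _ ⟨Y, hY, F, hF, rfl⟩
  exact hFZ α hα hαZ

/-- Cylindrical Extension. -/
theorem cylindrical_extension {Var A : Type} [Nonempty A]
    (𝕏 : Hyperteam Var A) (U : Set Var) (hU : HyperteamOn 𝕏 U) :
    ∀ x : Var, ∀ W : Set Var, U ⊆ W →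
      equivH (cylH 𝕏 x) (dualH (extH W (dualH 𝕏) x)) :=
  fun x W hUW => ⟨incl_cylH_dualH_extH 𝕏 W x, incl_dualH_extH_cylH hU hUW x⟩

end ADIF
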